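/- arXiv:1805.02322 — 3 statements merged into one kernel-verified Lean document; each statement's English description precedes it below -/
import Mathlib

section
/- If h > g > 0, then the function p ↦ log₂(1 + h p) − log₂(1 + g p) is strictly increasing and concave on p ≥ 0. -/
/-! The derivative of `p ↦ logb b (1 + h p) - logb b (1 + g p)` is
`(h - g) / ((1 + h p) (1 + g p) log b)`: for `b > 1` and `0 ≤ g < h` it is positive, and it
decreases on `p ≥ 0` because both factors of its denominator increase. -/

open Real Set

noncomputable def secrecyRate (b h g p : ℝ) : ℝ :=
  logb b (1 + h * p) - logb b (1 + g * p)

lemma hasDerivAt_logb_one_add_mul {b a x : ℝ} (hx : 1 + a * x ≠ 0) :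
    HasDerivAt (fun p => logb b (1 + a * p)) (a / ((1 + a * x) * log b)) x := by
  have := (((hasDerivAt_id x).const_mul a).const_add 1).log hx |>.div_const (log b)
  rwa [mul_one, div_div] at this

namespace secrecyRate

variable {b h g x : ℝ}

lemma hasDerivAt (hhx : 1 + h * x ≠ 0) (hgx : 1 + g * x ≠ 0) :
    HasDerivAt (secrecyRate b h g) ((h - g) / ((1 + h * x) * (1 + g * x) * log b)) x := by
  refine ((hasDerivAt_logb_one_add_mul (b := b) hhx).sub
    (hasDerivAt_logb_one_add_mul hgx)).congr_deriv ?_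
  rcases eq_or_ne (log b) 0 with hb | hb
  · simp [hb]
  · rw [div_sub_div _ _ (mul_ne_zero hhx hb) (mul_ne_zero hgx hb),
      div_eq_div_iff (by simp [*]) (by simp [*])]
    ring

lemma hasDerivAt_of_nonneg (hh : 0 ≤ h) (hg : 0 ≤ g) (hx : 0 ≤ x) :
    HasDerivAt (secrecyRate b h g) ((h - g) / ((1 + h * x) * (1 + g * x) * log b)) x :=
  hasDerivAt (by positivity) (by positivity)

lemma continuousOn (hh : 0 ≤ h) (hg : 0 ≤ g) : ContinuousOn (secrecyRate b h g) (Ici 0) :=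
  fun _ hx => (hasDerivAt_of_nonneg (b := b) hh hg hx).continuousAt.continuousWithinAt

theorem strictMonoOn (hb : 1 < b) (hg : 0 ≤ g) (hgh : g < h) :
    StrictMonoOn (secrecyRate b h g) (Ici 0) := by
  have hh : 0 ≤ h := hg.trans hgh.le
  refine strictMonoOn_of_deriv_pos (convex_Ici 0) (continuousOn hh hg) fun x hx => ?_
  rw [interior_Ici, mem_Ioi] at hx
  have : 0 < h - g := sub_pos.mpr hgh
  have : 0 < log b := log_pos hb
  rw [(hasDerivAt_of_nonneg hh hg hx.le).deriv]
  positivity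

theorem concaveOn (hb : 1 < b) (hg : 0 ≤ g) (hgh : g ≤ h) :
    ConcaveOn ℝ (Ici 0) (secrecyRate b h g) := by
  have hh : 0 ≤ h := hg.trans hgh
  refine AntitoneOn.concaveOn_of_deriv (convex_Ici 0) (continuousOn hh hg) ?_ ?_ <;>
    rw [interior_Ici]
  · exact fun x hx =>
      (hasDerivAt_of_nonneg hh hg (le_of_lt hx)).differentiableAt.differentiableWithinAt
  · intro x hx y hy hxy
    have : 0 < log b := log_pos hb
    rw [mem_Ioi] at hx hy
    rw [(hasDerivAt_of_nonneg hh hg hx.le).deriv, (hasDerivAt_of_nonneg hh hg hy.le).deriv]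
    apply div_le_div_of_nonneg_left (sub_nonneg.mpr hgh) (by positivity)
    gcongr

end secrecyRate

/-- If `h > g > 0`, then `p ↦ log₂(1+hp) − log₂(1+gp)` is strictly increasing and
concave on `p ≥ 0`. -/
theorem stmt_3 (h g : ℝ) (hg : 0 < g) (hhg : g < h) :
    StrictMonoOn (fun p : ℝ => Real.logb 2 (1 + h * p) - Real.logb 2 (1 + g * p))
      (Set.Ici 0) ∧
    ConcaveOn ℝ (Set.Ici 0)
      (fun p : ℝ => Real.logb 2 (1 + h * p) - Real.logb 2 (1 + g * p)) :=
  ⟨secrecyRate.strictMonoOn one_lt_two hg.le hhg, secrecyRate.concaveOn one_lt_two hg.le hhg.le⟩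
end

section
/- If h > g > 0, then ψ(p) = α T p − λ T B (log₂(1 + h p) − log₂(1 + g p)) is convex on p ≥ 0. -/
/-!
Up to the linear term `α T p`, `ψ` is a nonnegative multiple of
`p ↦ log (1 + g p) - log (1 + h p)`, whose derivative
`g / (1 + g p) - h / (1 + h p) = -(h - g) / ((1 + g p) (1 + h p))` increases on `p ≥ 0`
because the denominator does.
-/

open Real Set

lemma hasDerivAt_log_one_add_mul {a x : ℝ} (hx : 0 < 1 + a * x) :
    HasDerivAt (fun p => log (1 + a * p)) (a / (1 + a * x)) x := by
  simpa using (((hasDerivAt_id x).const_mul a).const_add 1).log hx.ne'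

lemma convexOn_log_one_add_mul_sub_log_one_add_mul {a b : ℝ} (hb : 0 ≤ b) (hba : b ≤ a) :
    ConvexOn ℝ (Ici 0) fun p => log (1 + b * p) - log (1 + a * p) := by
  have ha : 0 ≤ a := hb.trans hba
  have hpos : ∀ {c x : ℝ}, 0 ≤ c → 0 ≤ x → 0 < 1 + c * x := fun hc hx => by positivity
  have hderiv : ∀ x ∈ Ici (0 : ℝ), HasDerivAt (fun p => log (1 + b * p) - log (1 + a * p))
      (-(a - b) / ((1 + b * x) * (1 + a * x))) x := by
    intro x (hx : 0 ≤ x)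
    refine ((hasDerivAt_log_one_add_mul (hpos hb hx)).sub
      (hasDerivAt_log_one_add_mul (hpos ha hx))).congr_deriv ?_
    field_simp [(hpos hb hx).ne', (hpos ha hx).ne']
    ring
  refine MonotoneOn.convexOn_of_deriv (convex_Ici 0)
    (fun x hx => (hderiv x hx).continuousAt.continuousWithinAt)
    (fun x hx => (hderiv x (interior_subset hx)).differentiableAt.differentiableWithinAt) ?_
  rw [interior_Ici]
  intro x (hx : 0 < x) y (hy : 0 < y) hxy
  rw [(hderiv x hx.le).deriv, (hderiv y hy.le).deriv, neg_div, neg_div, neg_le_neg_iff]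
  exact div_le_div_of_nonneg_left (sub_nonneg.mpr hba)
    (mul_pos (hpos hb hx.le) (hpos ha hx.le)) (by gcongr)

theorem stmt_4_general (α T B lam h g : ℝ) (hT : 0 < T) (hB : 0 < B)
    (hlam : 0 ≤ lam) (hg : 0 < g) (hhg : g < h) :
    ConvexOn ℝ (Set.Ici 0)
      (fun p : ℝ => α * T * p -
        lam * T * B * (Real.logb 2 (1 + h * p) - Real.logb 2 (1 + g * p))) := by
  have hlinear : ConvexOn ℝ (Ici (0 : ℝ)) fun p => α * T * p :=
    (LinearMap.mul ℝ ℝ (α * T)).convexOn (convex_Ici 0)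
  have hlog : ConvexOn ℝ (Ici (0 : ℝ))
      fun p => lam * T * B / log 2 * (log (1 + g * p) - log (1 + h * p)) :=
    (convexOn_log_one_add_mul_sub_log_one_add_mul hg.le hhg.le).smul (by positivity)
  refine (hlinear.add hlog).congr fun p _ => ?_
  simp only [Pi.add_apply, logb]
  ring

/-- If `h > g > 0`, then `ψ(p) = α T p − λ T B (log₂(1+hp) − log₂(1+gp))` is convex
on `p ≥ 0`. -/
theorem stmt_4 (α T B lam h g : ℝ) (hα : 0 < α) (hT : 0 < T) (hB : 0 < B)
    (hlam : 0 ≤ lam) (hg : 0 < g) (hhg : g < h) :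
    ConvexOn ℝ (Set.Ici 0)
      (fun p : ℝ => α * T * p -
        lam * T * B * (Real.logb 2 (1 + h * p) - Real.logb 2 (1 + g * p))) :=
  stmt_4_general α T B lam h g hT hB hlam hg hhg
end

section
/- If h > g > 0 and λ B (h − g) / (ln 2 · α) > 1 · (the derivative condition at 0 is negative, i.e., λ B (h−g)/(ln2 · α) > 1), then the minimizer over p ≥ 0 of ψ(p) = α T p − λ T B (log₂(1+hp) − log₂(1+gp)) is p* = (√Δ − (h+g)) / (2 h g), where Δ = (h−g)^2 + (4 λ B h g / (ln 2 · α)) (h − g); moreover p* > 0 and satisfies ψ'(p*) = 0. -/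
/-!
Writing `F p = (1 + h p)(1 + g p)` and `K = λ B (h − g) / (ln 2 · α)`, the derivative of `ψ` is
`ψ' p = α T (1 − K / F p)`. Since `F` increases on `p ≥ 0` from `F 0 = 1 < K`, the derivative is
nonpositive up to the unique positive root of the quadratic `F p = K` and nonnegative after it, so
that root, which is `p*`, minimises `ψ` on `p ≥ 0`.
-/

open Real Set

lemma hasDerivAt_logb_one_add_mul_sub_logb_one_add_mul {b h g p : ℝ} (hhp : 0 < 1 + h * p)
    (hgp : 0 < 1 + g * p) :
    HasDerivAt (fun q => logb b (1 + h * q) - logb b (1 + g * q))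
      ((h - g) / ((1 + h * p) * (1 + g * p)) / log b) p := by
  have hasDerivAt_logb (c : ℝ) (hcp : 0 < 1 + c * p) :
      HasDerivAt (fun q => logb b (1 + c * q)) (c / (1 + c * p) / log b) p := by
    have hlin : HasDerivAt (fun q => 1 + c * q) c p := by
      simpa using ((hasDerivAt_id p).const_mul c).const_add 1
    simpa [logb] using (hlin.log hcp.ne').div_const (log b)
  refine ((hasDerivAt_logb h hhp).sub (hasDerivAt_logb g hgp)).congr_deriv ?_
  rw [← sub_div, div_sub_div _ _ hhp.ne' hgp.ne']
  ring

lemma hasDerivAt_rate_objective {α T B lam b h g p : ℝ} (hα : α ≠ 0)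
    (hhp : 0 < 1 + h * p) (hgp : 0 < 1 + g * p) :
    HasDerivAt (fun q => α * T * q - lam * T * B * (logb b (1 + h * q) - logb b (1 + g * q)))
      (α * T * (1 - lam * B * (h - g) / (log b * α) / ((1 + h * p) * (1 + g * p)))) p := by
  refine (((hasDerivAt_id p).const_mul (α * T)).sub
    ((hasDerivAt_logb_one_add_mul_sub_logb_one_add_mul (b := b) hhp hgp).const_mul
      (lam * T * B))).congr_deriv ?_
  rcases eq_or_ne (log b) 0 with hb | hb
  · simp [hb]
  · field_simp

lemma one_add_mul_mul_one_add_mul_le {h g x y : ℝ} (hh : 0 ≤ h) (hg : 0 ≤ g) (hx : 0 ≤ x)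
    (hxy : x ≤ y) : (1 + h * x) * (1 + g * x) ≤ (1 + h * y) * (1 + g * y) := by
  have hy : 0 ≤ y := hx.trans hxy
  gcongr

lemma one_add_mul_mul_one_add_mul_eq_of_sq_eq {h g K s : ℝ} (hh : h ≠ 0) (hg : g ≠ 0)
    (hs : s ^ 2 = (h - g) ^ 2 + 4 * h * g * K) :
    (1 + h * ((s - (h + g)) / (2 * h * g))) * (1 + g * ((s - (h + g)) / (2 * h * g))) = K := by
  field_simp
  linear_combination hs

lemma quadratic_root_pos {h g K : ℝ} (hh : 0 < h) (hg : 0 < g) (hK : 1 < K) :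
    0 < (√((h - g) ^ 2 + 4 * h * g * K) - (h + g)) / (2 * h * g) := by
  have hlt : (h + g) ^ 2 < (h - g) ^ 2 + 4 * h * g * K := by
    nlinarith [mul_pos (mul_pos hh hg) (sub_pos.mpr hK)]
  have hsqrt : h + g < √((h - g) ^ 2 + 4 * h * g * K) :=
    lt_sqrt_of_sq_lt hlt
  exact div_pos (by linarith) (by positivity)

lemma isMinOn_Ici_of_hasDerivAt_mul_one_sub_div {f F : ℝ → ℝ} {a c K x₀ : ℝ} (hc : 0 ≤ c)
    (hax₀ : a ≤ x₀) (hf : ∀ x ∈ Ici a, HasDerivAt f (c * (1 - K / F x)) x)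
    (hF : MonotoneOn F (Ici a)) (hF_pos : ∀ x ∈ Ici a, 0 < F x) (hx₀ : F x₀ = K) :
    IsMinOn f (Ici a) x₀ := by
  have hdiff : DifferentiableOn ℝ f (Ioi a) := fun x hx =>
    (hf x (mem_Ici_of_Ioi hx)).differentiableAt.differentiableWithinAt
  refine isMinOn_Ici_of_deriv (hf a self_mem_Ici).continuousAt (hf x₀ hax₀).continuousAt
    (hdiff.mono Ioo_subset_Ioi_self) (hdiff.mono (Ioi_subset_Ioi hax₀)) ?_ ?_
  · intro x ⟨hax, hxx₀⟩
    have hFx : F x ≤ K := hx₀ ▸ hF hax.le hax₀ hxx₀.le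
    rw [(hf x hax.le).deriv]
    exact mul_nonpos_of_nonneg_of_nonpos hc
      (sub_nonpos.mpr ((one_le_div (hF_pos x hax.le)).mpr hFx))
  · intro x hx₀x
    have hax : a ≤ x := hax₀.trans hx₀x.le
    have hFx : K ≤ F x := hx₀ ▸ hF hax₀ hax hx₀x.le
    rw [(hf x hax).deriv]
    exact mul_nonneg hc (sub_nonneg.mpr ((div_le_one (hF_pos x hax)).mpr hFx))

theorem stmt_5_general (α T B lam h g : ℝ) (hα : 0 < α) (hT : 0 < T)
    (hg : 0 < g) (hhg : g < h)
    (hcond : 1 < lam * B * (h - g) / (Real.log 2 * α)) :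
    let Δ : ℝ := (h - g) ^ 2 + 4 * lam * B * h * g / (Real.log 2 * α) * (h - g)
    let pstar : ℝ := (Real.sqrt Δ - (h + g)) / (2 * h * g)
    let ψ : ℝ → ℝ := fun p => α * T * p -
      lam * T * B * (Real.logb 2 (1 + h * p) - Real.logb 2 (1 + g * p))
    0 < pstar ∧ IsMinOn ψ (Set.Ici 0) pstar ∧ deriv ψ pstar = 0 := by
  intro Δ pstar ψ
  set K := lam * B * (h - g) / (log 2 * α)
  set F : ℝ → ℝ := fun p => (1 + h * p) * (1 + g * p)
  have hh : 0 < h := hg.trans hhg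
  have hΔ : Δ = (h - g) ^ 2 + 4 * h * g * K := by simp only [Δ, K]; ring
  have hpos : 0 < pstar := by
    simp only [pstar, hΔ]
    exact quadratic_root_pos hh hg hcond
  have hsq : √Δ ^ 2 = (h - g) ^ 2 + 4 * h * g * K := by
    rw [hΔ]
    exact sq_sqrt (by
      nlinarith [sq_nonneg (h - g), mul_pos (mul_pos hh hg) (zero_lt_one.trans hcond)])
  have hroot : F pstar = K := one_add_mul_mul_one_add_mul_eq_of_sq_eq hh.ne' hg.ne' hsq
  have hψ : ∀ p ∈ Ici 0, HasDerivAt ψ (α * T * (1 - K / F p)) p := fun p (hp : 0 ≤ p) =>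
    hasDerivAt_rate_objective hα.ne' (by positivity) (by positivity)
  have hF : MonotoneOn F (Ici 0) := fun x hx _ _ hxy =>
    one_add_mul_mul_one_add_mul_le hh.le hg.le hx hxy
  refine ⟨hpos, isMinOn_Ici_of_hasDerivAt_mul_one_sub_div (by positivity) hpos.le hψ hF
    (fun p (hp : 0 ≤ p) => by positivity) hroot, ?_⟩
  rw [(hψ pstar hpos.le).deriv, hroot, div_self (zero_lt_one.trans hcond).ne', sub_self, mul_zero]

/-- If `h > g > 0` and `λ B (h−g)/(ln 2 · α) > 1`, then the minimizer over `p ≥ 0` of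
`ψ(p) = α T p − λ T B (log₂(1+hp) − log₂(1+gp))` is
`p* = (√Δ − (h+g))/(2hg)` with `Δ = (h−g)² + (4 λ B h g/(ln 2 · α))(h−g)`;
moreover `p* > 0` and `ψ'(p*) = 0`. -/
theorem stmt_5 (α T B lam h g : ℝ) (hα : 0 < α) (hT : 0 < T) (hB : 0 < B)
    (hlam : 0 ≤ lam) (hg : 0 < g) (hhg : g < h)
    (hcond : 1 < lam * B * (h - g) / (Real.log 2 * α)) :
    let Δ : ℝ := (h - g) ^ 2 + 4 * lam * B * h * g / (Real.log 2 * α) * (h - g)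
    let pstar : ℝ := (Real.sqrt Δ - (h + g)) / (2 * h * g)
    let ψ : ℝ → ℝ := fun p => α * T * p -
      lam * T * B * (Real.logb 2 (1 + h * p) - Real.logb 2 (1 + g * p))
    0 < pstar ∧ IsMinOn ψ (Set.Ici 0) pstar ∧ deriv ψ pstar = 0 :=
  stmt_5_general α T B lam h g hα hT hg hhg hcond
end
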